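/- For x ∈ [0,1) with binary digits X_i(x), so that x = Σ_{i≥1} X_i(x)/2^i with the digit sequence not eventually 1, let m_k(x) denote the k-th smallest index i with X_i(x) = 1. Let x, y ∈ (0,1) be non-dyadic with x > y, and let n = n(x,y) be the largest n such that m_k(x) = m_k(y) for all k ≤ n. Then x - y ≥ 2^{-m_{n+2}(x)}. -/

import Mathlib

/-- The `i`-th binary digit of `x ∈ [0,1)` (expansion not eventually 1), `i ≥ 1`. -/
noncomputable def binDigit (x : ℝ) (i : ℕ) : ℕ := ⌊x * 2 ^ i⌋.toNat % 2

/-- Dyadic rationals. -/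
def dyadicRat : Set ℝ := {x | ∃ (n : ℕ) (k : ℤ), x = (k : ℝ) / 2 ^ n}

/-- `mIdx x k` is the `k`-th smallest index `i ≥ 1` with `binDigit x i = 1` (`k ≥ 1`). -/
noncomputable def mIdx (x : ℝ) (k : ℕ) : ℕ :=
  Nat.nth (fun i => 1 ≤ i ∧ binDigit x i = 1) (k - 1)

lemma floor_succ (x : ℝ) (hx : 0 ≤ x) (i : ℕ) :
    ⌊x * 2 ^ (i+1)⌋ = 2 * ⌊x * 2 ^ i⌋ + binDigit x (i+1) := by
  have h0 : (0:ℝ) ≤ x * 2 ^ (i+1) := by positivity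
  have hb0 : (0:ℤ) ≤ ⌊x * 2 ^ (i+1)⌋ := Int.floor_nonneg.2 h0
  have hrw : x * 2 ^ (i+1) = (x * 2 ^ i) * 2 := by ring
  have h1 : 2 * ⌊x * 2 ^ i⌋ ≤ ⌊x * 2 ^ (i+1)⌋ := by
    rw [hrw]
    refine Int.le_floor.2 ?_
    push_cast
    nlinarith [Int.floor_le (x * 2 ^ i)]
  have h2 : ⌊x * 2 ^ (i+1)⌋ < 2 * ⌊x * 2 ^ i⌋ + 2 := by
    rw [hrw]
    refine Int.floor_lt.2 ?_
    push_cast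
    nlinarith [Int.lt_floor_add_one (x * 2 ^ i)]
  unfold binDigit
  omega

lemma infinite_ones (x : ℝ) (hx : x ∈ Set.Ioo (0:ℝ) 1) (hxd : x ∉ dyadicRat) :
    {i : ℕ | 1 ≤ i ∧ binDigit x i = 1}.Infinite := by
  by_contra h
  rw [Set.not_infinite] at h
  obtain ⟨N, hN⟩ := h.bddAbove
  have hx0 : (0:ℝ) ≤ x := le_of_lt hx.1
  -- digits beyond N are zero
  have hzero : ∀ i, N < i → binDigit x i = 0 := by
    intro i hi
    by_contra hb
    have h1 : binDigit x i = 1 := by unfold binDigit at hb ⊢; omega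
    exact absurd (hN ⟨by omega, h1⟩) (by omega)
  -- floors are determined
  have hfl : ∀ j : ℕ, ⌊x * 2 ^ (N + j)⌋ = 2 ^ j * ⌊x * 2 ^ N⌋ := by
    intro j
    induction j with
    | zero => simp
    | succ j ih =>
      have := floor_succ x hx0 (N + j)
      rw [show N + (j+1) = (N+j)+1 from rfl, this, ih, hzero (N+j+1) (by omega)]
      ring
  -- x * 2^N is not an integer
  have hnotint : (⌊x * 2 ^ N⌋ : ℝ) < x * 2 ^ N := by
    rcases lt_or_eq_of_le (Int.floor_le (x * 2 ^ N)) with h' | h'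
    · exact h'
    · exfalso
      apply hxd
      refine ⟨N, ⌊x * 2 ^ N⌋, ?_⟩
      rw [eq_div_iff (by positivity : (2:ℝ)^N ≠ 0)]
      linarith
  set δ : ℝ := x * 2 ^ N - ⌊x * 2 ^ N⌋ with hδ
  have hδpos : 0 < δ := by rw [hδ]; linarith
  obtain ⟨j, hj⟩ := pow_unbounded_of_one_lt (δ⁻¹) (by norm_num : (1:ℝ) < 2)
  have hlt : x * 2 ^ (N + j) < 2 ^ j * ⌊x * 2 ^ N⌋ + 1 := by
    have := Int.lt_floor_add_one (x * 2 ^ (N + j))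
    rw [hfl j] at this
    push_cast at this ⊢
    linarith
  have : δ * 2 ^ j < 1 := by
    have h2 : x * 2 ^ (N + j) = (x * 2 ^ N) * 2 ^ j := by ring
    rw [h2] at hlt
    nlinarith
  have h1' : (1:ℝ) < δ * 2 ^ j := by
    have := (inv_lt_iff_one_lt_mul₀ hδpos).1 hj
    linarith [this]
  linarith

/-- agreement of digits up to r gives equal floors -/
lemma floor_eq_of_agree (x y : ℝ) (hx : x ∈ Set.Ioo (0:ℝ) 1) (hy : y ∈ Set.Ioo (0:ℝ) 1)
    (r : ℕ) (h : ∀ i, 1 ≤ i → i ≤ r → binDigit x i = binDigit y i) :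
    ⌊x * 2 ^ r⌋ = ⌊y * 2 ^ r⌋ := by
  induction r with
  | zero =>
    simp only [pow_zero, mul_one]
    rw [Int.floor_eq_zero_iff.2 ⟨hx.1.le, hx.2⟩, Int.floor_eq_zero_iff.2 ⟨hy.1.le, hy.2⟩]
  | succ r ih =>
    rw [floor_succ x hx.1.le, floor_succ y hy.1.le,
      ih (fun i h1 h2 => h i h1 (by omega)), h (r+1) (by omega) le_rfl]

/-- key lemma -/
lemma key (x y : ℝ) (hx : x ∈ Set.Ioo (0:ℝ) 1) (hy : y ∈ Set.Ioo (0:ℝ) 1)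
    (hxd : x ∉ dyadicRat) (hyd : y ∉ dyadicRat) (n : ℕ)
    (hagree : ∀ k : ℕ, 1 ≤ k → k ≤ n → mIdx x k = mIdx y k)
    (hlt : mIdx x (n+1) < mIdx y (n+1)) :
    x - y > ((2:ℝ) ^ mIdx x (n+2))⁻¹ := by
  set px : ℕ → Prop := fun i => 1 ≤ i ∧ binDigit x i = 1 with hpx
  set py : ℕ → Prop := fun i => 1 ≤ i ∧ binDigit y i = 1 with hpy
  have infx : (setOf px).Infinite := infinite_ones x hx hxd
  have infy : (setOf py).Infinite := infinite_ones y hy hyd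
  have hmIx : ∀ k : ℕ, mIdx x (k+1) = Nat.nth px k := fun k => by
    simp [mIdx, hpx]
  have hmIy : ∀ k : ℕ, mIdx y (k+1) = Nat.nth py k := fun k => by
    simp [mIdx, hpy]
  rw [hmIx, hmIy] at hlt
  -- nth of x and y agree for j < n
  have hnth : ∀ j, j < n → Nat.nth px j = Nat.nth py j := by
    intro j hj
    have := hagree (j+1) (by omega) (by omega)
    rwa [hmIx, hmIy] at this
  -- membership below m: p i and i < nth n → ∃ j < n, nth j = i
  have hbelow : ∀ (p : ℕ → Prop) (hp : (setOf p).Infinite) i, p i → i < Nat.nth p n →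
      ∃ j, j < n ∧ Nat.nth p j = i := by
    intro p hp i hi hlt'
    have : i ∈ Set.range (Nat.nth p) := by
      rw [Nat.range_nth_of_infinite hp]; exact hi
    obtain ⟨j, rfl⟩ := this
    exact ⟨j, (Nat.nth_lt_nth hp).1 hlt', rfl⟩
  have hm1 : 1 ≤ Nat.nth px n := (Nat.nth_mem_of_infinite infx n).1
  obtain ⟨m₀, hm₀⟩ : ∃ k, Nat.nth px n = k + 1 := ⟨Nat.nth px n - 1, by omega⟩
  -- digits agree strictly below m
  have hagreedig : ∀ i, 1 ≤ i → i ≤ m₀ → binDigit x i = binDigit y i := by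
    intro i h1 h2
    have him : i < Nat.nth px n := by omega
    have him' : i < Nat.nth py n := by omega
    have hdx01 : binDigit x i = 0 ∨ binDigit x i = 1 := by unfold binDigit; omega
    have hdy01 : binDigit y i = 0 ∨ binDigit y i = 1 := by unfold binDigit; omega
    have fwd : binDigit x i = 1 → binDigit y i = 1 := by
      intro hd
      obtain ⟨j, hj, hji⟩ := hbelow px infx i ⟨h1, hd⟩ him
      have : py i := by
        rw [← hji, hnth j hj]; exact Nat.nth_mem_of_infinite infy j
      exact this.2
    have bwd : binDigit y i = 1 → binDigit x i = 1 := by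
      intro hd
      obtain ⟨j, hj, hji⟩ := hbelow py infy i ⟨h1, hd⟩ him'
      have : px i := by
        rw [← hji, ← hnth j hj]; exact Nat.nth_mem_of_infinite infx j
      exact this.2
    rcases hdx01 with h'|h' <;> rcases hdy01 with h''|h'' <;> omega
  have hA : ⌊x * 2 ^ m₀⌋ = ⌊y * 2 ^ m₀⌋ :=
    floor_eq_of_agree x y hx hy m₀ (fun i h1 h2 => hagreedig i h1 h2)
  set A := ⌊y * 2 ^ m₀⌋ with hAdef
  -- digit of x at m is 1, digit of y at m is 0
  have hdx : binDigit x (m₀+1) = 1 := hm₀ ▸ (Nat.nth_mem_of_infinite infx n).2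
  rw [hm₀] at hlt
  have hdy : binDigit y (m₀+1) = 0 := by
    have h01 : binDigit y (m₀+1) = 0 ∨ binDigit y (m₀+1) = 1 := by unfold binDigit; omega
    rcases h01 with h'|h'
    · exact h'
    · exfalso
      obtain ⟨j, hj, hji⟩ := hbelow py infy (m₀+1) ⟨by omega, h'⟩ hlt
      have : Nat.nth px j < m₀ + 1 := by
        rw [← hm₀]; exact (Nat.nth_lt_nth infx).2 hj
      rw [hnth j hj, hji] at this
      omega
  have hfx : ⌊x * 2 ^ (m₀+1)⌋ = 2 * A + 1 := by
    rw [floor_succ x hx.1.le, hdx, hA]; push_cast; ring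
  have hfy : ⌊y * 2 ^ (m₀+1)⌋ = 2 * A := by
    rw [floor_succ y hy.1.le, hdy]; simp [hAdef]
  -- M := nth px (n+1)
  have hMm : m₀ + 1 < Nat.nth px (n+1) := by
    rw [← hm₀]; exact (Nat.nth_lt_nth infx).2 (by omega)
  obtain ⟨M₀, hM₀⟩ : ∃ k, Nat.nth px (n+1) = k + 1 := ⟨Nat.nth px (n+1) - 1, by omega⟩
  rw [hM₀] at hMm
  have hdxM : binDigit x (M₀+1) = 1 := hM₀ ▸ (Nat.nth_mem_of_infinite infx (n+1)).2
  -- scaling: ⌊x 2^M₀⌋ ≥ 2^(M₀ - (m₀+1)) * ⌊x 2^(m₀+1)⌋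
  have hscale : ∀ (t : ℝ) (a b : ℕ), 0 ≤ t → a ≤ b →
      2 ^ (b - a) * ⌊t * 2 ^ a⌋ ≤ ⌊t * 2 ^ b⌋ := by
    intro t a b ht hab
    refine Int.le_floor.2 ?_
    have : t * 2 ^ b = (t * 2 ^ a) * 2 ^ (b - a) := by
      rw [mul_assoc, ← pow_add]
      congr 2
      omega
    rw [this]
    push_cast
    have := Int.floor_le (t * 2 ^ a)
    nlinarith [pow_pos (show (0:ℝ) < 2 by norm_num) (b - a)]
  set e := M₀ - m₀ with he
  have he1 : 1 ≤ e := by omega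
  have hxM : (2:ℤ) ^ e * (2 * A + 1) + 1 ≤ ⌊x * 2 ^ (M₀+1)⌋ := by
    have h1 : 2 ^ (M₀ - (m₀+1)) * ⌊x * 2 ^ (m₀+1)⌋ ≤ ⌊x * 2 ^ M₀⌋ :=
      hscale x (m₀+1) M₀ hx.1.le (by omega)
    have h2 := floor_succ x hx.1.le M₀
    rw [hdxM] at h2
    rw [hfx] at h1
    have hee : e = (M₀ - (m₀+1)) + 1 := by omega
    rw [hee, pow_succ]
    push_cast at h2 ⊢
    nlinarith [h1]
  have hyM : ⌊y * 2 ^ (M₀+1)⌋ ≤ 2 ^ e * (2 * A + 1) - 1 := by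
    have hylt : y * 2 ^ (m₀+1) < 2 * A + 1 := by
      have := Int.lt_floor_add_one (y * 2 ^ (m₀+1))
      rw [hfy] at this
      push_cast at this
      linarith
    have : y * 2 ^ (M₀+1) < ((2:ℤ) ^ e * (2 * A + 1) : ℤ) := by
      have hrw : y * 2 ^ (M₀+1) = (y * 2 ^ (m₀+1)) * 2 ^ e := by
        rw [mul_assoc, ← pow_add]
        congr 2
        omega
      rw [hrw]
      push_cast
      nlinarith [pow_pos (show (0:ℝ) < 2 by norm_num) e]
    have := Int.floor_lt.2 this
    omega
  -- final arithmetic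
  have hxlb : ((2:ℤ) ^ e * (2 * A + 1) + 1 : ℝ) ≤ x * 2 ^ (M₀+1) := by
    have := Int.floor_le (x * 2 ^ (M₀+1))
    calc ((2:ℤ) ^ e * (2 * A + 1) + 1 : ℝ) ≤ (⌊x * 2 ^ (M₀+1)⌋ : ℝ) := by exact_mod_cast Int.cast_le.2 hxM
      _ ≤ x * 2 ^ (M₀+1) := this
  have hyub : y * 2 ^ (M₀+1) < ((2:ℤ) ^ e * (2 * A + 1) : ℝ) := by
    have h1 := Int.lt_floor_add_one (y * 2 ^ (M₀+1))
    have h2 : (⌊y * 2 ^ (M₀+1)⌋ : ℝ) + 1 ≤ ((2:ℤ) ^ e * (2 * A + 1) : ℝ) := by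
      have : ⌊y * 2 ^ (M₀+1)⌋ + 1 ≤ 2 ^ e * (2 * A + 1) := by omega
      exact_mod_cast Int.cast_le.2 this
    linarith
  have hdiff : (1:ℝ) < (x - y) * 2 ^ (M₀+1) := by
    push_cast at hxlb hyub
    nlinarith
  have hMval : mIdx x (n+2) = M₀ + 1 := by rw [show n+2 = (n+1)+1 from rfl, hmIx, hM₀]
  rw [hMval]
  rw [gt_iff_lt, inv_lt_iff_one_lt_mul₀ (by positivity)]
  nlinarith [hdiff]


/-- If the positions of the first `n` one-digits of non-dyadic `x > y` agree but
the `(n+1)`-st do not, then `x - y ≥ 2^{-m_{n+2}(x)}`. -/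
theorem gap_lower_bound (x y : ℝ) (hx : x ∈ Set.Ioo (0:ℝ) 1) (hy : y ∈ Set.Ioo (0:ℝ) 1)
    (hxd : x ∉ dyadicRat) (hyd : y ∉ dyadicRat) (hxy : y < x) (n : ℕ)
    (hagree : ∀ k : ℕ, 1 ≤ k → k ≤ n → mIdx x k = mIdx y k)
    (hmax : mIdx x (n+1) ≠ mIdx y (n+1)) :
    x - y ≥ ((2:ℝ) ^ mIdx x (n+2))⁻¹ := by
  rcases lt_or_gt_of_ne hmax with h | h
  · exact le_of_lt (key x y hx hy hxd hyd n hagree h)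
  · exfalso
    have := key y x hy hx hyd hxd n (fun k h1 h2 => (hagree k h1 h2).symm) h
    have hpos : (0:ℝ) < ((2:ℝ) ^ mIdx y (n+2))⁻¹ := by positivity
    linarith
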